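/- For every λ ∈ (−1/2, 0) ∪ (0, ∞) and every integer n ≥ 2, ∫₀¹ ([C_n^{(λ+1)}(x)]² − [C_{n−2}^{(λ+1)}(x)]²) dx = ((n+λ)/(2λ²))·([C_n^{(λ)}(1)]² + (2λ−1)·‖C_n^{(λ)}‖₂²). -/

import Mathlib

open Real MeasureTheory Finset

/-- Gegenbauer polynomials `C_n^{(λ)}`: `C_0 = 1`, `C_1 = 2λx`, and
`n C_n(x) = 2(n+λ-1) x C_{n-1}(x) - (n+2λ-2) C_{n-2}(x)` for `n ≥ 2`. -/
noncomputable def gegenbauer (lam : ℝ) : ℕ → ℝ → ℝ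
  | 0, _ => 1
  | 1, x => 2 * lam * x
  | n + 2, x =>
      (2 * ((n : ℝ) + 1 + lam) * x * gegenbauer lam (n + 1) x
        - ((n : ℝ) + 2 * lam) * gegenbauer lam n x) / ((n : ℝ) + 2)

lemma geg_rec (lam : ℝ) (n : ℕ) (x : ℝ) :
    gegenbauer lam (n+2) x =
      (2 * ((n : ℝ) + 1 + lam) * x * gegenbauer lam (n + 1) x
        - ((n : ℝ) + 2 * lam) * gegenbauer lam n x) / ((n : ℝ) + 2) := rfl

lemma geg_zero (lam : ℝ) (x : ℝ) : gegenbauer lam 0 x = 1 := rfl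
lemma geg_one (lam : ℝ) (x : ℝ) : gegenbauer lam 1 x = 2 * lam * x := rfl

lemma geg_rec3 (lam : ℝ) (n : ℕ) (x : ℝ) :
    gegenbauer lam (n+3) x =
      (2 * ((n : ℝ) + 2 + lam) * x * gegenbauer lam (n + 2) x
        - ((n : ℝ) + 1 + 2 * lam) * gegenbauer lam (n+1) x) / ((n : ℝ) + 3) := by
  rw [show n+3 = n+1+2 from rfl, geg_rec]
  push_cast
  ring_nf

lemma geg_rec4 (lam : ℝ) (n : ℕ) (x : ℝ) :
    gegenbauer lam (n+4) x =
      (2 * ((n : ℝ) + 3 + lam) * x * gegenbauer lam (n + 3) x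
        - ((n : ℝ) + 2 + 2 * lam) * gegenbauer lam (n+2) x) / ((n : ℝ) + 4) := by
  rw [show n+4 = n+2+2 from rfl, geg_rec]
  push_cast
  ring_nf

/-- contiguous relation B -/
lemma geg_B (lam : ℝ) : ∀ n : ℕ, ∀ x : ℝ, gegenbauer lam (n+2) x =
    gegenbauer (lam+1) (n+2) x - 2*x*gegenbauer (lam+1) (n+1) x + gegenbauer (lam+1) n x := by
  have key : ∀ n : ℕ, (∀ x : ℝ, gegenbauer lam (n+2) x =
      gegenbauer (lam+1) (n+2) x - 2*x*gegenbauer (lam+1) (n+1) x + gegenbauer (lam+1) n x) ∧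
      (∀ x : ℝ, gegenbauer lam (n+3) x =
      gegenbauer (lam+1) (n+3) x - 2*x*gegenbauer (lam+1) (n+2) x + gegenbauer (lam+1) (n+1) x) := by
    intro n
    induction n with
    | zero =>
      constructor
      · intro x
        rw [show (2:ℕ) = 0 + 2 from rfl, geg_rec, geg_rec, geg_zero, geg_zero, geg_one, geg_one]
        push_cast; ring
      · intro x
        rw [show (3:ℕ) = 1 + 2 from rfl, geg_rec, geg_rec,
          show (2:ℕ) = 0 + 2 from rfl, geg_rec, geg_rec, geg_zero, geg_zero, geg_one, geg_one]
        push_cast; ring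
    | succ k ih =>
      obtain ⟨ih0, ih1⟩ := ih
      refine ⟨ih1, ?_⟩
      intro x
      simp only [show k+1+3 = k+4 from rfl, show k+1+2 = k+3 from rfl, show k+1+1 = k+2 from rfl]
      rw [geg_rec4 lam k x, ih1 x, ih0 x, geg_rec4 (lam+1) k x, geg_rec3 (lam+1) k x,
        geg_rec (lam+1) k x]
      have e2 : ((k:ℝ)+2) ≠ 0 := by positivity
      have e3 : ((k:ℝ)+3) ≠ 0 := by positivity
      have e4 : ((k:ℝ)+4) ≠ 0 := by positivity
      field_simp
      ring
  exact fun n => (key n).1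

/-- contiguous relation A: `(n+λ) C_n^{(λ)} = λ (C_n^{(λ+1)} - C_{n-2}^{(λ+1)})` -/
lemma geg_A (lam : ℝ) (hl : -(1/2:ℝ) < lam) : ∀ n : ℕ, ∀ x : ℝ,
    ((n:ℝ)+2+lam) * gegenbauer lam (n+2) x =
      lam * (gegenbauer (lam+1) (n+2) x - gegenbauer (lam+1) n x) := by
  have key : ∀ n : ℕ, (∀ x : ℝ, ((n:ℝ)+2+lam) * gegenbauer lam (n+2) x =
      lam * (gegenbauer (lam+1) (n+2) x - gegenbauer (lam+1) n x)) ∧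
      (∀ x : ℝ, ((n:ℝ)+3+lam) * gegenbauer lam (n+3) x =
      lam * (gegenbauer (lam+1) (n+3) x - gegenbauer (lam+1) (n+1) x)) := by
    intro n
    induction n with
    | zero =>
      constructor
      · intro x
        rw [show (2:ℕ) = 0 + 2 from rfl, geg_rec, geg_rec, geg_zero, geg_zero, geg_one, geg_one]
        push_cast; ring
      · intro x
        rw [show (3:ℕ) = 1 + 2 from rfl, geg_rec, geg_rec (lam+1) 1, show (1:ℕ) + 1 = 0 + 2 from rfl,
          geg_rec, geg_rec, geg_zero, geg_zero, geg_one, geg_one]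
        push_cast; ring
    | succ k ih =>
      obtain ⟨ih0, ih1⟩ := ih
      have cast1 : ((k+1:ℕ):ℝ) = (k:ℝ)+1 := by push_cast; ring
      refine ⟨?_, ?_⟩
      · intro x
        rw [show k+1+2 = k+3 from rfl, show ((k+1:ℕ):ℝ) + 2 = (k:ℝ)+3 by push_cast; ring]
        exact ih1 x
      intro x
      simp only [show k+1+3 = k+4 from rfl, show k+1+2 = k+3 from rfl, show k+1+1 = k+2 from rfl,
        cast1]
      have e2 : ((k:ℝ)+2) ≠ 0 := by positivity
      have e3 : ((k:ℝ)+3) ≠ 0 := by positivity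
      have e4 : ((k:ℝ)+4) ≠ 0 := by positivity
      have hk : (0:ℝ) ≤ (k:ℝ) := Nat.cast_nonneg k
      have f2 : ((k:ℝ)+2+lam) ≠ 0 := by nlinarith
      have f3 : ((k:ℝ)+3+lam) ≠ 0 := by nlinarith
      have h3 : gegenbauer lam (k+3) x
          = lam * (gegenbauer (lam+1) (k+3) x - gegenbauer (lam+1) (k+1) x) / ((k:ℝ)+3+lam) := by
        field_simp
        linear_combination ih1 x
      have h2 : gegenbauer lam (k+2) x
          = lam * (gegenbauer (lam+1) (k+2) x - gegenbauer (lam+1) k x) / ((k:ℝ)+2+lam) := by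
        field_simp
        linear_combination ih0 x
      rw [geg_rec4 lam k x, h3, h2]
      simp only [geg_rec4 (lam+1) k x, geg_rec3 (lam+1) k x, geg_rec (lam+1) k x]
      field_simp
      ring
  exact fun n => (key n).1

noncomputable def dgeg (lam : ℝ) : ℕ → ℝ → ℝ
  | 0, _ => 0
  | n+1, x => 2 * lam * gegenbauer (lam+1) n x

lemma geg_deriv (lam : ℝ) (hl : -(1/2:ℝ) < lam) :
    ∀ n : ℕ, ∀ x : ℝ, HasDerivAt (gegenbauer lam n) (dgeg lam n x) x := by
  have key : ∀ n : ℕ, (∀ x, HasDerivAt (gegenbauer lam n) (dgeg lam n x) x) ∧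
      (∀ x, HasDerivAt (gegenbauer lam (n+1)) (dgeg lam (n+1) x) x) := by
    intro n
    induction n with
    | zero =>
      constructor
      · intro x
        have h0 : gegenbauer lam 0 = fun _ => (1:ℝ) := rfl
        rw [h0]
        simpa [dgeg] using hasDerivAt_const x (1:ℝ)
      · intro x
        have h1 : gegenbauer lam 1 = fun y => 2 * lam * y := rfl
        rw [h1]
        have : HasDerivAt (fun y : ℝ => 2 * lam * y) (2*lam) x := by
          simpa using (hasDerivAt_id x).const_mul (2*lam)
        simpa [dgeg, geg_zero] using this
    | succ k ih =>
      obtain ⟨ih0, ih1⟩ := ih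
      refine ⟨ih1, ?_⟩
      intro x
      have hfun : gegenbauer lam (k+1+1) = fun y =>
          (2 * ((k : ℝ) + 1 + lam) * y * gegenbauer lam (k + 1) y
            - ((k : ℝ) + 2 * lam) * gegenbauer lam k y) / ((k : ℝ) + 2) :=
        funext (geg_rec lam k)
      rw [hfun]
      have h1 : HasDerivAt (fun y : ℝ => 2*((k:ℝ)+1+lam)*y) (2*((k:ℝ)+1+lam)) x := by
        simpa using (hasDerivAt_id x).const_mul (2*((k:ℝ)+1+lam))
      have H := ((h1.mul (ih1 x)).sub ((ih0 x).const_mul ((k:ℝ)+2*lam))).div_const ((k:ℝ)+2)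
      refine H.congr_deriv (Eq.symm ?_)
      have e2 : ((k:ℝ)+2) ≠ 0 := by positivity
      rw [eq_div_iff e2]
      cases k with
      | zero =>
        simp only [Nat.zero_add, dgeg, geg_one, geg_zero]
        push_cast
        ring
      | succ m =>
        simp only [show m+1+1 = m+2 from rfl, dgeg]
        have hA := geg_A lam hl m x
        have hR : ((m:ℝ)+2) * gegenbauer (lam+1) (m+2) x
            = 2*((m:ℝ)+2+lam)*x*gegenbauer (lam+1) (m+1) x
              - ((m:ℝ)+2+2*lam)*gegenbauer (lam+1) m x := by
          rw [geg_rec (lam+1) m x]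
          have e2' : ((m:ℝ)+2) ≠ 0 := by positivity
          field_simp
          ring
        push_cast
        linear_combination (-2)*hA + 2*lam*hR
  exact fun n => (key n).1

lemma geg_cont (lam : ℝ) (hl : -(1/2:ℝ) < lam) (n : ℕ) : Continuous (gegenbauer lam n) :=
  continuous_iff_continuousAt.2 fun x => (geg_deriv lam hl n x).continuousAt


theorem gegenbauer_L2_norm_difference (lam : ℝ)
    (hlam : lam ∈ Set.Ioo (-(1/2) : ℝ) 0 ∪ Set.Ioi (0 : ℝ)) (n : ℕ) (hn : 2 ≤ n) :
    (∫ x in (0:ℝ)..1, ((gegenbauer (lam + 1) n x) ^ 2 - (gegenbauer (lam + 1) (n - 2) x) ^ 2)) =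
      (((n : ℝ) + lam) / (2 * lam ^ 2))
        * ((gegenbauer lam n 1) ^ 2
            + (2 * lam - 1) * (∫ x in (0:ℝ)..1, (gegenbauer lam n x) ^ 2)) := by
  have hl : -(1/2:ℝ) < lam := by
    rcases hlam with h | h
    · exact h.1
    · linarith [h.out]
  have hne : lam ≠ 0 := by
    rcases hlam with h | h
    · exact ne_of_lt h.2
    · exact ne_of_gt h.out
  have hl1 : -(1/2:ℝ) < lam + 1 := by linarith
  obtain ⟨m, rfl⟩ : ∃ m, n = m + 2 := ⟨n - 2, by omega⟩
  have hsub : m + 2 - 2 = m := by omega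
  rw [hsub]
  set a : ℝ → ℝ := gegenbauer lam (m+2) with ha
  set dg : ℝ → ℝ := dgeg lam (m+2) with hdg
  have hderiv : ∀ x, HasDerivAt a (dg x) x := geg_deriv lam hl (m+2)
  have hconta : Continuous a := geg_cont lam hl (m+2)
  have hcontdg : Continuous dg := by
    have : dg = fun x => 2 * lam * gegenbauer (lam+1) (m+1) x := rfl
    rw [this]
    exact continuous_const.mul (geg_cont (lam+1) hl1 (m+1))
  -- pointwise identity
  have hpt : ∀ x : ℝ, gegenbauer (lam+1) (m+2) x ^ 2 - gegenbauer (lam+1) m x ^ 2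
      = (((m:ℝ)+2+lam)/lam) * a x ^ 2
        + (((m:ℝ)+2+lam)/(2*lam^2)) * (x * (2 * a x ^ 1 * dg x)) := by
    intro x
    have hA := geg_A lam hl m x
    have hB := geg_B lam m x
    have hdgx : dg x = 2 * lam * gegenbauer (lam+1) (m+1) x := rfl
    rw [hdgx, ha]
    field_simp
    linear_combination (-(gegenbauer (lam+1) (m+2) x + gegenbauer (lam+1) m x)) * hA
      + (-((m:ℝ)+2+lam) * gegenbauer lam (m+2) x) * hB
  -- integration by parts
  have hparts : (∫ x in (0:ℝ)..1, x * (2 * a x ^ 1 * dg x))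
      = 1 * a 1 ^ 2 - 0 * a 0 ^ 2 - ∫ x in (0:ℝ)..1, 1 * a x ^ 2 := by
    apply intervalIntegral.integral_mul_deriv_eq_deriv_mul
      (u := fun x : ℝ => x) (u' := fun _ => (1:ℝ))
      (v := fun x => a x ^ 2) (v' := fun x => 2 * a x ^ 1 * dg x)
    · intro x _; exact hasDerivAt_id' x
    · intro x _; exact (hderiv x).pow 2
    · exact continuous_const.intervalIntegrable _ _
    · exact (((continuous_const.mul (hconta.pow 1)).mul hcontdg)).intervalIntegrable _ _
  -- put it together
  have hint1 : IntervalIntegrable (fun x => (((m:ℝ)+2+lam)/lam) * a x ^ 2) volume 0 1 :=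
    (continuous_const.mul (hconta.pow 2)).intervalIntegrable _ _
  have hint2 : IntervalIntegrable
      (fun x => (((m:ℝ)+2+lam)/(2*lam^2)) * (x * (2 * a x ^ 1 * dg x))) volume 0 1 :=
    (continuous_const.mul (continuous_id.mul
      ((continuous_const.mul (hconta.pow 1)).mul hcontdg))).intervalIntegrable _ _
  calc (∫ x in (0:ℝ)..1, (gegenbauer (lam+1) (m+2) x ^ 2 - gegenbauer (lam+1) m x ^ 2))
      = ∫ x in (0:ℝ)..1, ((((m:ℝ)+2+lam)/lam) * a x ^ 2
          + (((m:ℝ)+2+lam)/(2*lam^2)) * (x * (2 * a x ^ 1 * dg x))) := by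
        apply intervalIntegral.integral_congr
        intro x _
        exact hpt x
    _ = (((m:ℝ)+2+lam)/lam) * (∫ x in (0:ℝ)..1, a x ^ 2)
          + (((m:ℝ)+2+lam)/(2*lam^2)) * (∫ x in (0:ℝ)..1, x * (2 * a x ^ 1 * dg x)) := by
        rw [intervalIntegral.integral_add hint1 hint2, intervalIntegral.integral_const_mul,
          intervalIntegral.integral_const_mul]
    _ = ((↑(m+2) : ℝ) + lam) / (2 * lam ^ 2)
        * ((gegenbauer lam (m+2) 1) ^ 2
            + (2 * lam - 1) * (∫ x in (0:ℝ)..1, (gegenbauer lam (m+2) x) ^ 2)) := by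
        rw [hparts]
        simp only [one_mul, zero_mul]
        push_cast
        field_simp
        ring
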